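/- arXiv:1611.10143 — 6 statements merged into one kernel-verified Lean document; each statement's English description precedes it below -/
import Mathlib

section
/- Binet formula for Horadam octonions: for all n, OG_n = (A·α̲·α^n − B·β̲·β^n)/(α − β), where α̲ = ∑_{i=0}^{7} α^i·e_i and β̲ = ∑_{i=0}^{7} β^i·e_i. -/
open Quaternion

/-- The real octonions, via the Cayley–Dickson construction on the quaternions. -/
def Octonion : Type := ℍ[ℝ] × ℍ[ℝ]

namespace Octonion

noncomputable instance : AddCommGroup Octonion := inferInstanceAs (AddCommGroup (ℍ[ℝ] × ℍ[ℝ]))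
noncomputable instance : Module ℝ Octonion := inferInstanceAs (Module ℝ (ℍ[ℝ] × ℍ[ℝ]))

/-- Cayley–Dickson multiplication. -/
noncomputable instance : Mul Octonion :=
  ⟨fun x y =>
    let a := (x : ℍ[ℝ] × ℍ[ℝ]); let b := (y : ℍ[ℝ] × ℍ[ℝ])
    ((a.1 * b.1 - star b.2 * a.2, b.2 * a.1 + a.2 * star b.1) : ℍ[ℝ] × ℍ[ℝ])⟩

noncomputable instance : One Octonion := ⟨(((1 : ℍ[ℝ]), (0 : ℍ[ℝ])) : ℍ[ℝ] × ℍ[ℝ])⟩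

/-- Octonion conjugation. -/
noncomputable def conj (x : Octonion) : Octonion :=
  ((star (x : ℍ[ℝ] × ℍ[ℝ]).1, -(x : ℍ[ℝ] × ℍ[ℝ]).2) : ℍ[ℝ] × ℍ[ℝ])

/-- The standard basis `e 0 = 1, e 1, …, e 7` of the octonions. -/
noncomputable def e : Fin 8 → Octonion
  | 0 => (((1 : ℍ[ℝ]), 0) : ℍ[ℝ] × ℍ[ℝ])
  | 1 => (((⟨0,1,0,0⟩ : ℍ[ℝ]), 0) : ℍ[ℝ] × ℍ[ℝ])
  | 2 => (((⟨0,0,1,0⟩ : ℍ[ℝ]), 0) : ℍ[ℝ] × ℍ[ℝ])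
  | 3 => (((⟨0,0,0,1⟩ : ℍ[ℝ]), 0) : ℍ[ℝ] × ℍ[ℝ])
  | 4 => ((0, (1 : ℍ[ℝ])) : ℍ[ℝ] × ℍ[ℝ])
  | 5 => ((0, (⟨0,1,0,0⟩ : ℍ[ℝ])) : ℍ[ℝ] × ℍ[ℝ])
  | 6 => ((0, (⟨0,0,1,0⟩ : ℍ[ℝ])) : ℍ[ℝ] × ℍ[ℝ])
  | 7 => ((0, (⟨0,0,0,1⟩ : ℍ[ℝ])) : ℍ[ℝ] × ℍ[ℝ])

end Octonion

/-- Binet formula for Horadam octonions. -/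
theorem horadam_octonion_binet (p q a b : ℝ) (hpq : p ^ 2 + 4 * q > 0)
    (α β A B : ℝ)
    (hα : α = (p + Real.sqrt (p ^ 2 + 4 * q)) / 2)
    (hβ : β = (p - Real.sqrt (p ^ 2 + 4 * q)) / 2)
    (hA : A = b - a * β) (hB : B = b - a * α)
    (w : ℕ → ℝ) (h0 : w 0 = a) (h1 : w 1 = b)
    (hrec : ∀ n, w (n + 2) = p * w (n + 1) + q * w n)
    (OG : ℕ → Octonion)
    (hOG : ∀ n, OG n = ∑ i : Fin 8, w (n + (i : ℕ)) • Octonion.e i)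
    (au bu : Octonion)
    (hau : au = ∑ i : Fin 8, α ^ (i : ℕ) • Octonion.e i)
    (hbu : bu = ∑ i : Fin 8, β ^ (i : ℕ) • Octonion.e i) :
    ∀ n : ℕ, OG n = ((α - β)⁻¹ : ℝ) • ((A * α ^ n) • au - (B * β ^ n) • bu) := by
  have hsq : Real.sqrt (p ^ 2 + 4 * q) ^ 2 = p ^ 2 + 4 * q := Real.sq_sqrt (le_of_lt hpq)
  have hs : Real.sqrt (p ^ 2 + 4 * q) > 0 := Real.sqrt_pos.2 hpq
  have hab : α - β = Real.sqrt (p ^ 2 + 4 * q) := by rw [hα, hβ]; ring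
  have hne : α - β ≠ 0 := by rw [hab]; exact ne_of_gt hs
  have hα2 : α ^ 2 = p * α + q := by rw [hα]; nlinarith [hsq]
  have hβ2 : β ^ 2 = p * β + q := by rw [hβ]; nlinarith [hsq]
  have wn : ∀ n, (α - β) * w n = A * α ^ n - B * β ^ n := by
    intro n
    induction n using Nat.strong_induction_on with
    | _ n ih =>
      match n with
      | 0 => simp only [pow_zero, h0, hA, hB]; ring
      | 1 => simp only [pow_one, h1, hA, hB]; ring
      | (k+2) =>
        have i1 := ih (k+1) (by omega)
        have i0 := ih k (by omega)
        rw [hrec]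
        linear_combination p * i1 + q * i0 - A * α ^ k * hα2 + B * β ^ k * hβ2
  intro n
  rw [hOG, hau, hbu, Finset.smul_sum, Finset.smul_sum, ← Finset.sum_sub_distrib,
    Finset.smul_sum]
  refine Finset.sum_congr rfl fun i _ => ?_
  rw [smul_smul, smul_smul, ← sub_smul, smul_smul]
  congr 1
  have := wn (n + (i : ℕ))
  field_simp
  linear_combination this
end

section
/- First Cassini identity for Horadam octonions: for all n ≥ 1, OG_{n−1} ∘ OG_{n+1} − OG_n ∘ OG_n = (A·B·(α·β)^{n−1}·(β·(α̲ ∘ β̲) − α·(β̲ ∘ α̲)))/(α − β), where ∘ denotes octonion multiplication. -/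
open Quaternion

namespace OctAux

/-- Pair constructor for octonions. -/
def mk (x y : ℍ[ℝ]) : Octonion := ((x, y) : ℍ[ℝ] × ℍ[ℝ])

lemma eta (x : Octonion) : x = mk (x : ℍ[ℝ] × ℍ[ℝ]).1 (x : ℍ[ℝ] × ℍ[ℝ]).2 := rfl

lemma mk_eq_mk {a b c d : ℍ[ℝ]} : mk a b = mk c d ↔ a = c ∧ b = d := Prod.ext_iff

lemma mk_mul_mk (a b c d : ℍ[ℝ]) :
    mk a b * mk c d = mk (a * c - star d * b) (d * a + b * star c) := rfl

lemma smul_mk (r : ℝ) (a b : ℍ[ℝ]) : r • mk a b = mk (r • a) (r • b) := rfl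

lemma mk_sub_mk (a b c d : ℍ[ℝ]) : mk a b - mk c d = mk (a - c) (b - d) := rfl

lemma smul_mul' (r : ℝ) (x y : Octonion) : (r • x) * y = r • (x * y) := by
  rw [eta x, eta y, smul_mk, mk_mul_mk, mk_mul_mk, smul_mk, mk_eq_mk]
  constructor
  · simp [smul_sub, smul_mul_assoc, mul_smul_comm]
  · simp [smul_add, smul_mul_assoc, mul_smul_comm]

lemma mul_smul' (r : ℝ) (x y : Octonion) : x * (r • y) = r • (x * y) := by
  rw [eta x, eta y, smul_mk, mk_mul_mk, mk_mul_mk, smul_mk, mk_eq_mk]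
  constructor
  · simp [Quaternion.star_smul, smul_sub, smul_mul_assoc, mul_smul_comm]
  · simp [Quaternion.star_smul, smul_add, smul_mul_assoc, mul_smul_comm]

lemma sub_mul' (x y z : Octonion) : (x - y) * z = x * z - y * z := by
  rw [eta x, eta y, eta z, mk_sub_mk, mk_mul_mk, mk_mul_mk, mk_mul_mk, mk_sub_mk, mk_eq_mk]
  constructor <;> noncomm_ring

lemma mul_sub' (x y z : Octonion) : x * (y - z) = x * y - x * z := by
  rw [eta x, eta y, eta z, mk_sub_mk, mk_mul_mk, mk_mul_mk, mk_mul_mk, mk_sub_mk, mk_eq_mk]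
  constructor <;> · simp only [star_sub]; noncomm_ring

end OctAux

/-- First Cassini identity for Horadam octonions. -/
theorem horadam_octonion_cassini_one (p q a b : ℝ) (hpq : p ^ 2 + 4 * q > 0)
    (α β A B : ℝ)
    (hα : α = (p + Real.sqrt (p ^ 2 + 4 * q)) / 2)
    (hβ : β = (p - Real.sqrt (p ^ 2 + 4 * q)) / 2)
    (hA : A = b - a * β) (hB : B = b - a * α)
    (w : ℕ → ℝ) (h0 : w 0 = a) (h1 : w 1 = b)
    (hrec : ∀ n, w (n + 2) = p * w (n + 1) + q * w n)
    (OG : ℕ → Octonion)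
    (hOG : ∀ n, OG n = ∑ i : Fin 8, w (n + (i : ℕ)) • Octonion.e i)
    (au bu : Octonion)
    (hau : au = ∑ i : Fin 8, α ^ (i : ℕ) • Octonion.e i)
    (hbu : bu = ∑ i : Fin 8, β ^ (i : ℕ) • Octonion.e i) :
    ∀ n : ℕ, 1 ≤ n →
      OG (n - 1) * OG (n + 1) - OG n * OG n =
        ((A * B * (α * β) ^ (n - 1)) / (α - β)) • (β • (au * bu) - α • (bu * au)) := by
  have hs : Real.sqrt (p ^ 2 + 4 * q) ^ 2 = p ^ 2 + 4 * q := Real.sq_sqrt hpq.le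
  have hp' : p = α + β := by rw [hα, hβ]; ring
  have hq' : q = -(α * β) := by
    rw [hα, hβ]; linear_combination (-1 / 4 : ℝ) * hs
  have hDeq : α - β = Real.sqrt (p ^ 2 + 4 * q) := by rw [hα, hβ]; ring
  have hD : α - β ≠ 0 := by
    rw [hDeq]; exact ne_of_gt (Real.sqrt_pos.mpr hpq)
  have binet : ∀ n, w n = (A * α ^ n - B * β ^ n) / (α - β) := by
    intro n
    induction n using Nat.twoStepInduction with
    | zero => rw [h0, hA, hB]; field_simp; ring
    | one => rw [h1, hA, hB]; field_simp; ring
    | more n ih1 ih2 =>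
      rw [hrec, ih1, ih2, hp', hq']
      field_simp
      ring
  have hOG' : ∀ n, OG n =
      ((A * α ^ n) / (α - β)) • au - ((B * β ^ n) / (α - β)) • bu := by
    intro n
    rw [hOG, hau, hbu, Finset.smul_sum, Finset.smul_sum, ← Finset.sum_sub_distrib]
    refine Finset.sum_congr rfl fun i _ => ?_
    rw [smul_smul, smul_smul, ← sub_smul, binet]
    congr 1
    field_simp
    ring
  intro n hn
  obtain ⟨m, rfl⟩ : ∃ m, n = m + 1 := ⟨n - 1, (Nat.succ_pred_eq_of_pos hn).symm⟩
  simp only [Nat.add_sub_cancel, hOG']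
  simp only [OctAux.sub_mul', OctAux.mul_sub', OctAux.smul_mul', OctAux.mul_smul', smul_smul]
  match_scalars <;> · field_simp; ring
end

section
/- Second Cassini identity for Horadam octonions: for all n ≥ 1, OG_{n+1} ∘ OG_{n−1} − OG_n ∘ OG_n = (A·B·(α·β)^{n−1}·(β·(β̲ ∘ α̲) − α·(α̲ ∘ β̲)))/(α − β). -/
open Quaternion

/-!
Binet's formula `(α - β) w n = A α ^ n - B β ^ n` lifts coefficientwise to
`(α - β) OG n = A α ^ n α̲ - B β ^ n β̲`. Octonion multiplication is not associative, but
Cassini's identity for a sequence in Binet form only uses bilinearity of the product: the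
`α̲ α̲` and `β̲ β̲` terms cancel and the cross terms leave
`A B (α β) ^ (n - 1) (α - β) (β β̲α̲ - α α̲β̲)`; dividing by `(α - β) ^ 2` gives the identity.
-/

namespace Octonion

/-- `Octonion` is a plain `def`, so its Cayley–Dickson components are reached through this
equivalence rather than by unfolding. -/
noncomputable def toProd : Octonion ≃ₗ[ℝ] ℍ[ℝ] × ℍ[ℝ] := LinearEquiv.refl ℝ _

lemma toProd_mul (x y : Octonion) :
    toProd (x * y) = ((toProd x).1 * (toProd y).1 - star (toProd y).2 * (toProd x).2,
      (toProd y).2 * (toProd x).1 + (toProd x).2 * star (toProd y).1) := rfl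

protected lemma add_mul (x y z : Octonion) : (x + y) * z = x * z + y * z := by
  apply toProd.injective
  ext <;> simp only [toProd_mul, map_add, Prod.fst_add, Prod.snd_add] <;> noncomm_ring

protected lemma mul_add (x y z : Octonion) : x * (y + z) = x * y + x * z := by
  apply toProd.injective
  ext <;> simp only [toProd_mul, map_add, Prod.fst_add, Prod.snd_add, star_add] <;> noncomm_ring

protected lemma smul_mul (r : ℝ) (x y : Octonion) : (r • x) * y = r • (x * y) := by
  apply toProd.injective
  ext1 <;> simp only [toProd_mul, map_smul, Prod.smul_fst, Prod.smul_snd,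
    smul_sub, smul_add, smul_mul_assoc, mul_smul_comm]

protected lemma mul_smul (r : ℝ) (x y : Octonion) : x * (r • y) = r • (x * y) := by
  apply toProd.injective
  ext1 <;> simp only [toProd_mul, map_smul, Prod.smul_fst, Prod.smul_snd, Quaternion.star_smul,
    smul_sub, smul_add, smul_mul_assoc, mul_smul_comm]

noncomputable def mulₗ : Octonion →ₗ[ℝ] Octonion →ₗ[ℝ] Octonion :=
  LinearMap.mk₂ ℝ (· * ·) Octonion.add_mul Octonion.smul_mul Octonion.mul_add Octonion.mul_smul

@[simp]
lemma mulₗ_apply (x y : Octonion) : mulₗ x y = x * y := rfl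

end Octonion

theorem binet_of_linear_recurrence {R : Type*} [CommRing R] {p q α β : R}
    (hα : α ^ 2 = p * α + q) (hβ : β ^ 2 = p * β + q) {w : ℕ → R}
    (hrec : ∀ n, w (n + 2) = p * w (n + 1) + q * w n) (n : ℕ) :
    (α - β) * w n = (w 1 - w 0 * β) * α ^ n - (w 1 - w 0 * α) * β ^ n := by
  induction n using Nat.twoStepInduction with
  | zero => ring
  | one => ring
  | more k ih₀ ih₁ =>
    calc (α - β) * w (k + 2) = p * ((α - β) * w (k + 1)) + q * ((α - β) * w k) := by
          rw [hrec]; ring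
      _ = (w 1 - w 0 * β) * α ^ k * (p * α + q) - (w 1 - w 0 * α) * β ^ k * (p * β + q) := by
          rw [ih₀, ih₁]; ring
      _ = _ := by rw [← hα, ← hβ]; ring

theorem smul_sum_shift_eq_binet {R M : Type*} [CommRing R] [AddCommGroup M] [Module R M]
    {γ A B α β : R} {w : ℕ → R} (hw : ∀ n, γ * w n = A * α ^ n - B * β ^ n)
    {k : ℕ} (e : Fin k → M) (n : ℕ) :
    γ • ∑ i : Fin k, w (n + i) • e i =
      (A * α ^ n) • ∑ i : Fin k, α ^ (i : ℕ) • e i -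
        (B * β ^ n) • ∑ i : Fin k, β ^ (i : ℕ) • e i := by
  simp only [Finset.smul_sum, smul_smul, ← Finset.sum_sub_distrib, ← sub_smul, hw, pow_add]
  congr! 2
  ring

theorem LinearMap.cassini_of_binet {R M N : Type*} [CommRing R] [AddCommGroup M] [Module R M]
    [AddCommGroup N] [Module R N] (f : M →ₗ[R] M →ₗ[R] N) {c d α β : R} {u v : M} {x : ℕ → M}
    (hx : ∀ n, x n = (c * α ^ n) • u - (d * β ^ n) • v) (m : ℕ) :
    f (x (m + 2)) (x m) - f (x (m + 1)) (x (m + 1)) =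
      (c * d * (α * β) ^ m * (α - β)) • (β • f v u - α • f u v) := by
  simp only [hx, map_sub, map_smul, LinearMap.sub_apply, LinearMap.smul_apply, pow_add, mul_pow]
  module

/-- Second Cassini identity for Horadam octonions. -/
theorem horadam_octonion_cassini_two (p q a b : ℝ) (hpq : p ^ 2 + 4 * q > 0)
    (α β A B : ℝ)
    (hα : α = (p + Real.sqrt (p ^ 2 + 4 * q)) / 2)
    (hβ : β = (p - Real.sqrt (p ^ 2 + 4 * q)) / 2)
    (hA : A = b - a * β) (hB : B = b - a * α)
    (w : ℕ → ℝ) (h0 : w 0 = a) (h1 : w 1 = b)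
    (hrec : ∀ n, w (n + 2) = p * w (n + 1) + q * w n)
    (OG : ℕ → Octonion)
    (hOG : ∀ n, OG n = ∑ i : Fin 8, w (n + (i : ℕ)) • Octonion.e i)
    (au bu : Octonion)
    (hau : au = ∑ i : Fin 8, α ^ (i : ℕ) • Octonion.e i)
    (hbu : bu = ∑ i : Fin 8, β ^ (i : ℕ) • Octonion.e i) :
    ∀ n : ℕ, 1 ≤ n →
      OG (n + 1) * OG (n - 1) - OG n * OG n =
        ((A * B * (α * β) ^ (n - 1)) / (α - β)) • (β • (bu * au) - α • (au * bu)) := by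
  have hsqrt : Real.sqrt (p ^ 2 + 4 * q) ^ 2 = p ^ 2 + 4 * q := Real.sq_sqrt hpq.le
  have hα_root : α ^ 2 = p * α + q := by rw [hα]; linear_combination hsqrt / 4
  have hβ_root : β ^ 2 = p * β + q := by rw [hβ]; linear_combination hsqrt / 4
  have hαβ : α - β ≠ 0 := by
    rw [show α - β = Real.sqrt (p ^ 2 + 4 * q) by rw [hα, hβ]; ring]
    exact (Real.sqrt_pos.mpr hpq).ne'
  have hw : ∀ n, (α - β) * w n = A * α ^ n - B * β ^ n := by
    simpa only [h0, h1, ← hA, ← hB] using binet_of_linear_recurrence hα_root hβ_root hrec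
  have hOG_binet : ∀ n, (α - β) • OG n = (A * α ^ n) • au - (B * β ^ n) • bu := by
    intro n
    rw [hOG, hau, hbu]
    exact smul_sum_shift_eq_binet hw Octonion.e n
  intro n hn
  obtain ⟨m, rfl⟩ := Nat.exists_eq_add_of_le' hn
  apply smul_right_injective Octonion (pow_ne_zero 2 hαβ)
  calc (α - β) ^ 2 • (OG (m + 1 + 1) * OG (m + 1 - 1) - OG (m + 1) * OG (m + 1))
      = Octonion.mulₗ ((α - β) • OG (m + 2)) ((α - β) • OG m)
          - Octonion.mulₗ ((α - β) • OG (m + 1)) ((α - β) • OG (m + 1)) := by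
        simp only [map_smul, LinearMap.smul_apply, Octonion.mulₗ_apply, smul_smul, ← sq, smul_sub,
          Nat.add_sub_cancel]
    _ = (A * B * (α * β) ^ m * (α - β)) • (β • (bu * au) - α • (au * bu)) :=
        LinearMap.cassini_of_binet Octonion.mulₗ hOG_binet m
    _ = (α - β) ^ 2 •
          ((A * B * (α * β) ^ (m + 1 - 1) / (α - β)) • (β • (bu * au) - α • (au * bu))) := by
        rw [smul_smul, Nat.add_sub_cancel]
        congr 1
        field_simp
end

section
/- Summation formula for Horadam octonions: if α ≠ 1 and β ≠ 1, then for all n, ∑_{i=0}^{n} OG_i = (1/(α−β))·(B·β̲·β^{n+1}/(1−β) − A·α̲·α^{n+1}/(1−α)) + (A·α̲·(1−β) − B·β̲·(1−α))/((α−β)(1−α)(1−β)). -/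
open Quaternion

set_option maxHeartbeats 1600000 in
/-- Summation formula for Horadam octonions. -/
theorem horadam_octonion_sum (p q a b : ℝ) (hpq : p ^ 2 + 4 * q > 0)
    (α β A B : ℝ)
    (hα : α = (p + Real.sqrt (p ^ 2 + 4 * q)) / 2)
    (hβ : β = (p - Real.sqrt (p ^ 2 + 4 * q)) / 2)
    (hα1 : α ≠ 1) (hβ1 : β ≠ 1)
    (hA : A = b - a * β) (hB : B = b - a * α)
    (w : ℕ → ℝ) (h0 : w 0 = a) (h1 : w 1 = b)
    (hrec : ∀ n, w (n + 2) = p * w (n + 1) + q * w n)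
    (OG : ℕ → Octonion)
    (hOG : ∀ n, OG n = ∑ i : Fin 8, w (n + (i : ℕ)) • Octonion.e i)
    (au bu : Octonion)
    (hau : au = ∑ i : Fin 8, α ^ (i : ℕ) • Octonion.e i)
    (hbu : bu = ∑ i : Fin 8, β ^ (i : ℕ) • Octonion.e i) :
    ∀ n : ℕ, ∑ i ∈ Finset.range (n + 1), OG i =
      ((α - β)⁻¹ : ℝ) • ((B * β ^ (n + 1) / (1 - β)) • bu - (A * α ^ (n + 1) / (1 - α)) • au)
        + (((α - β) * (1 - α) * (1 - β))⁻¹ : ℝ) •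
            ((A * (1 - β)) • au - (B * (1 - α)) • bu) := by

  -- basic facts
  set s := Real.sqrt (p ^ 2 + 4 * q) with hs
  have hs2 : s ^ 2 = p ^ 2 + 4 * q := Real.sq_sqrt (le_of_lt hpq)
  have hspos : 0 < s := Real.sqrt_pos.mpr hpq
  have hαβ : α - β ≠ 0 := by rw [hα, hβ]; intro h; nlinarith
  have h1α : 1 - α ≠ 0 := fun h => hα1 (by linarith [sub_eq_zero.mp h])
  have h1β : 1 - β ≠ 0 := fun h => hβ1 (by linarith [sub_eq_zero.mp h])
  have hα2 : α ^ 2 = p * α + q := by rw [hα]; nlinarith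
  have hβ2 : β ^ 2 = p * β + q := by rw [hβ]; nlinarith
  have binet : ∀ n, (α - β) * w n = A * α ^ n - B * β ^ n := by
    intro n
    induction n using Nat.twoStepInduction with
    | zero => rw [h0, hA, hB]; ring
    | one => rw [h1, hA, hB]; ring
    | more n ih1 ih2 =>
      have : (α - β) * w (n + 2) = p * ((α - β) * w (n + 1)) + q * ((α - β) * w n) := by
        rw [hrec]; ring
      rw [this, ih1, ih2]
      have e1 : α ^ (n + 2) = (p * α + q) * α ^ n := by rw [← hα2]; ring
      have e2 : β ^ (n + 2) = (p * β + q) * β ^ n := by rw [← hβ2]; ring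
      rw [e1, e2]; ring
  have hOG' : ∀ n, OG n = ((α - β)⁻¹ * (A * α ^ n)) • au - ((α - β)⁻¹ * (B * β ^ n)) • bu := by
    intro n
    rw [hOG, hau, hbu, Finset.smul_sum, Finset.smul_sum, ← Finset.sum_sub_distrib]
    refine Finset.sum_congr rfl fun i _ => ?_
    rw [smul_smul, smul_smul, ← sub_smul]
    congr 1
    have hw : w (n + (i : ℕ)) = (α - β)⁻¹ * (A * α ^ (n + (i : ℕ)) - B * β ^ (n + (i : ℕ))) := by
      field_simp
      linarith [binet (n + (i : ℕ))]
    rw [hw, pow_add, pow_add]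
    field_simp
  intro n
  induction n with
  | zero =>
    rw [Finset.sum_range_one, hOG' 0]
    match_scalars <;> · simp only [pow_zero, pow_one, mul_one]; field_simp; ring
  | succ n ih =>
    rw [Finset.sum_range_succ, ih, hOG' (n + 1)]
    match_scalars <;> field_simp <;> ring
end

section
/- Norm formula for Horadam octonions: for all n, Nr(OG_n) = (A²·α^{2n}·∑_{i=0}^{7} α^{2i} + B²·β^{2n}·∑_{i=0}^{7} β^{2i} − 2AB·(−q)^n·∑_{i=0}^{7} (−q)^i)/(α − β)². -/
open Quaternion

/-- Norm formula for Horadam octonions. -/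
theorem horadam_octonion_norm (p q a b : ℝ) (hpq : p ^ 2 + 4 * q > 0)
    (α β A B : ℝ)
    (hα : α = (p + Real.sqrt (p ^ 2 + 4 * q)) / 2)
    (hβ : β = (p - Real.sqrt (p ^ 2 + 4 * q)) / 2)
    (hA : A = b - a * β) (hB : B = b - a * α)
    (w : ℕ → ℝ) (h0 : w 0 = a) (h1 : w 1 = b)
    (hrec : ∀ n, w (n + 2) = p * w (n + 1) + q * w n) :
    ∀ n : ℕ, ∑ i : Fin 8, w (n + (i : ℕ)) ^ 2 =
      (A ^ 2 * α ^ (2 * n) * ∑ i : Fin 8, α ^ (2 * (i : ℕ))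
        + B ^ 2 * β ^ (2 * n) * ∑ i : Fin 8, β ^ (2 * (i : ℕ))
        - 2 * A * B * (-q) ^ n * ∑ i : Fin 8, (-q) ^ (i : ℕ)) / (α - β) ^ 2 := by
  intro n
  set s := Real.sqrt (p ^ 2 + 4 * q) with hs
  have hs2 : s ^ 2 = p ^ 2 + 4 * q := Real.sq_sqrt hpq.le
  have hspos : 0 < s := Real.sqrt_pos.mpr hpq
  have hd : α - β = s := by rw [hα, hβ]; ring
  have hne : α - β ≠ 0 := by rw [hd]; exact hspos.ne'
  have hα2 : α ^ 2 = p * α + q := by rw [hα]; nlinarith [hs2]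
  have hβ2 : β ^ 2 = p * β + q := by rw [hβ]; nlinarith [hs2]
  have hq : α * β = -q := by rw [hα, hβ]; nlinarith [hs2]
  -- Binet formula
  have hw : ∀ m, w m = (A * α ^ m - B * β ^ m) / (α - β) := by
    have key : ∀ m, w m = (A * α ^ m - B * β ^ m) / (α - β) ∧
        w (m + 1) = (A * α ^ (m + 1) - B * β ^ (m + 1)) / (α - β) := by
      intro m
      induction m with
      | zero =>
        constructor
        · rw [h0, eq_div_iff hne, hA, hB]; ring
        · rw [h1, eq_div_iff hne, hA, hB]; ring
      | succ k ih =>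
        refine ⟨ih.2, ?_⟩
        rw [hrec k, ih.1, ih.2]
        field_simp
        linear_combination (-A * α ^ k) * hα2 + (B * β ^ k) * hβ2
    exact fun m => (key m).1
  rw [Finset.mul_sum, Finset.mul_sum, Finset.mul_sum, ← Finset.sum_add_distrib,
    ← Finset.sum_sub_distrib, Finset.sum_div]
  refine Finset.sum_congr rfl fun i _ => ?_
  rw [hw (n + (i : ℕ)), div_pow, ← hq]
  congr 1
  ring
end

section
/- Generating function for Horadam octonions: as formal power series over the octonions, (1 − p·t − q·t²)·∑_{n≥0} OG_n·t^n = OG_0 + (OG_1 − p·OG_0)·t. -/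
open Quaternion

/-- Generating function for Horadam octonions, stated coefficient-wise: the Cauchy product of
the (real, central) power series `1 - p t - q t²` with `∑ OGₙ tⁿ` equals
`OG 0 + (OG 1 - p • OG 0) t`. -/
theorem horadam_octonion_generating_function (p q a b : ℝ)
    (w : ℕ → ℝ) (h0 : w 0 = a) (h1 : w 1 = b)
    (hrec : ∀ n, w (n + 2) = p * w (n + 1) + q * w n)
    (OG : ℕ → Octonion)
    (hOG : ∀ n, OG n = ∑ i : Fin 8, w (n + (i : ℕ)) • Octonion.e i)
    (c : ℕ → ℝ) (hc0 : c 0 = 1) (hc1 : c 1 = -p) (hc2 : c 2 = -q)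
    (hc : ∀ n, 3 ≤ n → c n = 0) :
    ∀ n : ℕ, ∑ i ∈ Finset.range (n + 1), c i • OG (n - i) =
      if n = 0 then OG 0 else if n = 1 then OG 1 - p • OG 0 else 0 := by
  have key : ∀ n, OG (n + 2) = p • OG (n + 1) + q • OG n := by
    intro n
    rw [hOG, hOG, hOG, Finset.smul_sum, Finset.smul_sum, ← Finset.sum_add_distrib]
    refine Finset.sum_congr rfl fun i _ => ?_
    rw [smul_smul, smul_smul, ← add_smul]
    congr 1
    have : n + 2 + (i : ℕ) = (n + (i : ℕ)) + 2 := by ring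
    rw [this, hrec]
    ring_nf
  intro n
  match n with
  | 0 => simp [hc0]
  | 1 =>
    rw [Finset.sum_range_succ, Finset.sum_range_succ]
    simp [hc0, hc1, sub_eq_add_neg, add_comm]
  | (m+2) =>
    have hz : ∀ i ∈ Finset.Ico 3 (m + 2 + 1), c i • OG (m + 2 - i) = 0 := by
      intro i hi
      rw [hc i (Finset.mem_Ico.mp hi).1, zero_smul]
    have hsplit : Finset.range (m + 2 + 1) = Finset.range 3 ∪ Finset.Ico 3 (m + 2 + 1) := by
      simp only [Finset.range_eq_Ico]
      exact (Finset.Ico_union_Ico_eq_Ico (by omega) (by omega)).symm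
    rw [hsplit, Finset.sum_union, Finset.sum_eq_zero hz, add_zero]
    · rw [Finset.sum_range_succ, Finset.sum_range_succ, Finset.sum_range_one]
      simp only [hc0, hc1, hc2, Nat.add_sub_cancel]
      have e0 : m + 2 - 0 = m + 2 := by omega
      have e1 : m + 2 - 1 = m + 1 := by omega
      rw [e0, e1, key m]
      simp only [if_neg (by omega : m + 2 ≠ 0), if_neg (by omega : m + 2 ≠ 1)]
      module
    · rw [Finset.range_eq_Ico]
      exact Finset.Ico_disjoint_Ico_consecutive 0 3 (m + 2 + 1)
end
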